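/- Define the Airy coefficients α : ℕ → ℝ by α(0) = 1, α(1) = 0, α(2) = -1/2, and α(k) = -(α(k-3) + α(k-2))/(k(k-1)) for all k ≥ 3. For k ∈ ℕ let m(k) = ⌊k/6⌋ and D(k) = ∏_{i=0}^{m(k)-1} (k - 6i - 1)(k - 6i - 2), with D(k) = 1 when m(k) = 0. Let a : ℕ → ℕ → ℝ satisfy: (i) a n k = α(k) for every n and every k ≤ 2n + 1; and (ii) |a n k| ≤ 2^{m(k)} / D(k) for all n and k. Define ψ_n : ℝ × ℝ → ℂ by ψ_n(r,t) = e^{it}·∑_{k=0}^∞ (a n k)·r^k and ψ : ℝ × ℝ → ℂ by ψ(r,t) = e^{it}·∑_{k=0}^∞ α(k)·r^k. Then for every R > 0, ψ_n converges to ψ uniformly on the strip [-R, R] × ℝ, i.e., sup{ |ψ_n(r,t) - ψ(r,t)| : |r| ≤ R, t ∈ ℝ } → 0 as n → ∞. -/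

import Mathlib

/-!
Both the iterate coefficients `a n k` and the Airy coefficients `α k` are dominated by
`2 ^ ⌊k/6⌋ / D k ≤ 2 ^ ⌊k/6⌋ / ⌊k/6⌋!`, so on `|r| ≤ R` the terms of both power series are
dominated by a summable sequence independent of `n` and `r`. Since the two series agree
in their first `2n + 2` terms, their difference is bounded by twice the tail of that
majorant beyond `2n + 2`, which tends to zero. The factor `e^{it}` has modulus one.
-/

open Filter Topology Finset

/-- The majorant denominator of Lemma 4.4: `D k = ∏_{i=0}^{⌊k/6⌋-1} (k-6i-1)(k-6i-2)`,
an empty product (hence `1`) when `⌊k/6⌋ = 0`. -/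
noncomputable def vimMajorantDenom (k : ℕ) : ℝ :=
  ∏ i ∈ Finset.range (k / 6), (((k : ℝ) - 6 * (i : ℝ) - 1) * ((k : ℝ) - 6 * (i : ℝ) - 2))

theorem summable_comp_nat_div {u : ℕ → ℝ} (hu : Summable u) (d : ℕ) [NeZero d] :
    Summable (fun k => u (k / d)) := by
  have h : Summable (fun p : ℕ × Fin d => u p.1 * (fun _ : Fin d => (1 : ℝ)) p.2) :=
    summable_mul_of_summable_norm (g := fun _ : Fin d => (1 : ℝ)) hu.abs Summable.of_finite
  simp only [mul_one] at h
  exact (Nat.divModEquiv d).summable_iff.2 h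

theorem tendstoUniformlyOn_tsum_of_eqOn_initial {ι X E : Type*} [NormedAddCommGroup E]
    [CompleteSpace E] {l : Filter ι} {f : ι → X → ℕ → E} {g : X → ℕ → E} {M : ℕ → ℝ}
    {N : ι → ℕ} {s : Set X} (hM : Summable M) (hN : Tendsto N l atTop)
    (hf : ∀ i, ∀ x ∈ s, ∀ k, ‖f i x k‖ ≤ M k) (hg : ∀ x ∈ s, ∀ k, ‖g x k‖ ≤ M k)
    (heq : ∀ i, ∀ x ∈ s, ∀ k < N i, f i x k = g x k) :
    TendstoUniformlyOn (fun i x => ∑' k, f i x k) (fun x => ∑' k, g x k) l s := by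
  have htail : Tendsto (fun i => ∑' k, 2 * M (k + N i)) l (𝓝 0) :=
    (tendsto_sum_nat_add fun k => 2 * M k).comp hN
  rw [Metric.tendstoUniformlyOn_iff]
  intro ε hε
  filter_upwards [htail.eventually (gt_mem_nhds hε)] with i hi x hx
  have hgs : Summable (g x) := .of_norm_bounded hM (hg x hx)
  have hfs : Summable (f i x) := .of_norm_bounded hM (hf i x hx)
  have hhead : ∑ k ∈ range (N i), (g x k - f i x k) = 0 :=
    sum_eq_zero fun k hk => by rw [heq i x hx k (mem_range.1 hk), sub_self]
  have hbound : ∀ k, ‖g x (k + N i) - f i x (k + N i)‖ ≤ 2 * M (k + N i) := fun k =>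
    (norm_sub_le _ _).trans (by linarith [hg x hx (k + N i), hf i x hx (k + N i)])
  calc dist (∑' k, g x k) (∑' k, f i x k)
      = ‖∑' k, (g x (k + N i) - f i x (k + N i))‖ := by
        rw [dist_eq_norm, ← hgs.tsum_sub hfs, ← (hgs.sub hfs).sum_add_tsum_nat_add (N i),
          hhead, zero_add]
    _ ≤ ∑' k, 2 * M (k + N i) :=
        tsum_of_norm_bounded ((summable_nat_add_iff (N i)).2 (hM.mul_left 2)).hasSum hbound
    _ < ε := hi

theorem tendstoUniformlyOn_cexp_mul_ofReal {ι : Type*} {l : Filter ι} {F : ι → ℝ → ℝ}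
    {f : ℝ → ℝ} {s : Set ℝ} (h : TendstoUniformlyOn F f l s) :
    TendstoUniformlyOn (fun i (p : ℝ × ℝ) => Complex.exp (Complex.I * p.2) * (F i p.1 : ℂ))
      (fun p => Complex.exp (Complex.I * p.2) * (f p.1 : ℂ)) l (s ×ˢ Set.univ) := by
  rw [Metric.tendstoUniformlyOn_iff] at h ⊢
  intro ε hε
  filter_upwards [h ε hε] with i hi p hp
  rw [dist_eq_norm, ← mul_sub, norm_mul, Complex.norm_exp_I_mul_ofReal, one_mul,
    ← Complex.ofReal_sub, Complex.norm_real, ← dist_eq_norm]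
  exact hi p.1 hp.1

theorem vimMajorantDenom_factor_bound {k i : ℕ} (hi : i < k / 6) :
    ((k / 6 : ℕ) : ℝ) - i ≤ ((k : ℝ) - 6 * i - 1) * ((k : ℝ) - 6 * i - 2) := by
  have hik : ((i : ℝ) + 1) ≤ (k / 6 : ℕ) := by exact_mod_cast hi
  have hk : 6 * ((k / 6 : ℕ) : ℝ) ≤ k := by exact_mod_cast Nat.mul_div_le k 6
  nlinarith

theorem factorial_le_vimMajorantDenom (k : ℕ) : ((k / 6).factorial : ℝ) ≤ vimMajorantDenom k := by
  have hfact : ((k / 6).factorial : ℝ) = ∏ i ∈ range (k / 6), (((k / 6 : ℕ) : ℝ) - i) := by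
    rw [← prod_range_add_one_eq_factorial, Nat.cast_prod, ← prod_range_reflect]
    refine prod_congr rfl fun i hi => ?_
    rw [mem_range] at hi
    push_cast [Nat.cast_sub (by omega : i ≤ k / 6 - 1), Nat.cast_sub (by omega : 1 ≤ k / 6)]
    ring
  rw [hfact]
  refine prod_le_prod (fun i hi => ?_) fun i hi => vimMajorantDenom_factor_bound (mem_range.1 hi)
  have : (i : ℝ) < (k / 6 : ℕ) := by exact_mod_cast mem_range.1 hi
  linarith

theorem abs_mul_pow_le_of_abs_le_two_pow_div_vimMajorantDenom {b r C : ℝ} {k : ℕ}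
    (hb : |b| ≤ 2 ^ (k / 6) / vimMajorantDenom k) (hr : |r| ≤ C) (hC : 1 ≤ C) :
    |b * r ^ k| ≤ C ^ 5 * ((2 * C ^ 6) ^ (k / 6) / (k / 6).factorial) := by
  have hb' : |b| ≤ 2 ^ (k / 6) / (k / 6).factorial :=
    hb.trans (div_le_div_of_nonneg_left (by positivity) (by positivity)
      (factorial_le_vimMajorantDenom k))
  have hrk : |r| ^ k ≤ C ^ 5 * (C ^ 6) ^ (k / 6) :=
    calc |r| ^ k ≤ C ^ k := pow_le_pow_left₀ (abs_nonneg r) hr k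
      _ ≤ C ^ (6 * (k / 6) + 5) := pow_le_pow_right₀ hC (by omega)
      _ = C ^ 5 * (C ^ 6) ^ (k / 6) := by ring
  calc |b * r ^ k| = |b| * |r| ^ k := by rw [abs_mul, abs_pow]
    _ ≤ 2 ^ (k / 6) / (k / 6).factorial * (C ^ 5 * (C ^ 6) ^ (k / 6)) :=
        mul_le_mul hb' hrk (by positivity) (by positivity)
    _ = C ^ 5 * ((2 * C ^ 6) ^ (k / 6) / (k / 6).factorial) := by rw [mul_pow]; ring

theorem vim_iterates_converge_uniformly_on_strip_general
    (α : ℕ → ℝ)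
    (a : ℕ → ℕ → ℝ)
    (hairy : ∀ n : ℕ, ∀ k ≤ 2 * n + 1, a n k = α k)
    (hbound : ∀ n k : ℕ, |a n k| ≤ 2 ^ (k / 6) / vimMajorantDenom k)
    (ψn : ℕ → ℝ × ℝ → ℂ)
    (hψn : ∀ n : ℕ, ∀ r t : ℝ,
      ψn n (r, t) = Complex.exp (Complex.I * t) * ((∑' k : ℕ, a n k * r ^ k : ℝ) : ℂ))
    (ψ : ℝ × ℝ → ℂ)
    (hψ : ∀ r t : ℝ,
      ψ (r, t) = Complex.exp (Complex.I * t) * ((∑' k : ℕ, α k * r ^ k : ℝ) : ℂ)) :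
    ∀ R : ℝ, 0 < R →
      TendstoUniformlyOn ψn ψ Filter.atTop (Set.Icc (-R) R ×ˢ (Set.univ : Set ℝ)) := by
  intro R _
  obtain ⟨C, hC, hRC⟩ : ∃ C, 1 ≤ C ∧ R ≤ C := ⟨max R 1, le_max_right R 1, le_max_left R 1⟩
  have hαbound (k : ℕ) : |α k| ≤ 2 ^ (k / 6) / vimMajorantDenom k :=
    hairy k k (by omega) ▸ hbound k k
  have hseries : TendstoUniformlyOn (fun n r => ∑' k, a n k * r ^ k)
      (fun r => ∑' k, α k * r ^ k) atTop (Set.Icc (-R) R) :=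
    tendstoUniformlyOn_tsum_of_eqOn_initial (N := fun n => 2 * n + 2)
      ((summable_comp_nat_div (Real.summable_pow_div_factorial (2 * C ^ 6)) 6).mul_left (C ^ 5))
      (tendsto_atTop_mono (fun n => show n ≤ 2 * n + 2 by omega) tendsto_id)
      (fun n r hr k => abs_mul_pow_le_of_abs_le_two_pow_div_vimMajorantDenom (hbound n k)
        ((abs_le.2 hr).trans hRC) hC)
      (fun r hr k => abs_mul_pow_le_of_abs_le_two_pow_div_vimMajorantDenom (hαbound k)
        ((abs_le.2 hr).trans hRC) hC)
      (fun n r _ k hk => by rw [hairy n k (by omega)])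
  have hψn' : ψn = fun n p =>
      Complex.exp (Complex.I * p.2) * ((∑' k, a n k * p.1 ^ k : ℝ) : ℂ) :=
    funext fun n => funext fun p => hψn n p.1 p.2
  have hψ' : ψ = fun p => Complex.exp (Complex.I * p.2) * ((∑' k, α k * p.1 ^ k : ℝ) : ℂ) :=
    funext fun p => hψ p.1 p.2
  rw [hψn', hψ']
  exact tendstoUniformlyOn_cexp_mul_ofReal hseries

/-- Theorem 4.5, two-variable form: the VIM iterates
`ψ_n(r,t) = e^{it} ∑ (a n k) r^k` converge to the exact solution
`ψ(r,t) = e^{it} ∑ α k r^k` uniformly on every strip `[-R, R] × ℝ`. -/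
theorem vim_iterates_converge_uniformly_on_strip
    (α : ℕ → ℝ) (hα0 : α 0 = 1) (hα1 : α 1 = 0) (hα2 : α 2 = -1/2)
    (hαrec : ∀ k : ℕ, 3 ≤ k → α k = -(α (k - 3) + α (k - 2)) / ((k : ℝ) * ((k : ℝ) - 1)))
    (a : ℕ → ℕ → ℝ)
    (hairy : ∀ n : ℕ, ∀ k ≤ 2 * n + 1, a n k = α k)
    (hbound : ∀ n k : ℕ, |a n k| ≤ 2 ^ (k / 6) / vimMajorantDenom k)
    (ψn : ℕ → ℝ × ℝ → ℂ)
    (hψn : ∀ n : ℕ, ∀ r t : ℝ,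
      ψn n (r, t) = Complex.exp (Complex.I * t) * ((∑' k : ℕ, a n k * r ^ k : ℝ) : ℂ))
    (ψ : ℝ × ℝ → ℂ)
    (hψ : ∀ r t : ℝ,
      ψ (r, t) = Complex.exp (Complex.I * t) * ((∑' k : ℕ, α k * r ^ k : ℝ) : ℂ)) :
    ∀ R : ℝ, 0 < R →
      TendstoUniformlyOn ψn ψ Filter.atTop (Set.Icc (-R) R ×ˢ (Set.univ : Set ℝ)) :=
  vim_iterates_converge_uniformly_on_strip_general α a hairy hbound ψn hψn ψ hψ
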